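/- Let T_t(X) = G₁(t)* X G₁(t) + X G₀(t) + G₀(t)* X and Q_t(X) = X G₁(t) + G₁(t)* X, with G₀(t) = −I⊗(½L*L + iH) − σ₊⊗(L + L*S)·νξ(t) and G₁(t) = I⊗L + σ₊⊗(S−I)·νξ(t). Then for every bounded X on the system Hilbert space and every 2×2 matrix A: T_t(A⊗X) + νξ(t)·Q_t(A⊗X)(σ₊⊗I) + ν*ξ(t)*·(σ₋⊗I)Q_t(A⊗X) = 𝓖_t(A⊗X), where 𝓖_t is the extended single-photon generator. -/

import Mathlib

open ContinuousLinearMap ComplexConjugate Matrix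
open scoped TensorProduct

/-! Multiplying a pure tensor `a ⊗ X` on either side by `1 ⊗ u + c • (σ ⊗ v)` only produces pure
tensors, so both sides of the identity are combinations of `A ⊗ _`, `Aσ₊ ⊗ _`, `σ₋A ⊗ _` and
`σ₋Aσ₊ ⊗ _`; the terms carrying `σ₊²` or `σ₋²` vanish. Comparing the four operator coefficients is
then a polynomial identity in noncommuting variables. -/

section LadderTensor

variable {R M B : Type*} [CommRing R] [Ring M] [Algebra R M] [Ring B] [Algebra R B]

theorem tmul_mul_one_tmul_add_smul (c : R) (a p : M) (x u v : B) :
    (a ⊗ₜ[R] x) * (1 ⊗ₜ[R] u + c • (p ⊗ₜ[R] v)) = a ⊗ₜ (x * u) + c • ((a * p) ⊗ₜ (x * v)) := by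
  rw [mul_add, mul_smul_comm, Algebra.TensorProduct.tmul_mul_tmul,
    Algebra.TensorProduct.tmul_mul_tmul, mul_one]

theorem one_tmul_add_smul_mul_tmul (c : R) (a m : M) (x u v : B) :
    (1 ⊗ₜ[R] u + c • (m ⊗ₜ[R] v)) * (a ⊗ₜ[R] x) = a ⊗ₜ (u * x) + c • ((m * a) ⊗ₜ (v * x)) := by
  rw [add_mul, smul_mul_assoc, Algebra.TensorProduct.tmul_mul_tmul,
    Algebra.TensorProduct.tmul_mul_tmul, one_mul]

theorem tmul_ladder_generator_eq {p m : M} (hp : p * p = 0) (hm : m * m = 0)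
    {c d : R} {a : M} {X L L' S S' K K' : B} {g₁ g₁' g₀ g₀' : M ⊗[R] B}
    (hg₁ : g₁ = 1 ⊗ₜ L + c • (p ⊗ₜ (S - 1)))
    (hg₁' : g₁' = 1 ⊗ₜ L' + d • (m ⊗ₜ (S' - 1)))
    (hg₀ : g₀ = -(1 ⊗ₜ K) - c • (p ⊗ₜ (L + L' * S)))
    (hg₀' : g₀' = -(1 ⊗ₜ K') - d • (m ⊗ₜ (L' + S' * L))) :
    g₁' * a ⊗ₜ X * g₁ + a ⊗ₜ X * g₀ + g₀' * a ⊗ₜ X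
        + c • ((a ⊗ₜ X * g₁ + g₁' * a ⊗ₜ X) * (p ⊗ₜ 1))
        + d • ((m ⊗ₜ 1) * (a ⊗ₜ X * g₁ + g₁' * a ⊗ₜ X))
      = a ⊗ₜ (L' * X * L - X * K - K' * X)
        + c • ((a * p) ⊗ₜ ((L' * X - X * L') * S))
        + d • ((m * a) ⊗ₜ (S' * (X * L - L * X)))
        + (d * c) • ((m * a * p) ⊗ₜ (S' * X * S - X)) := by
  have hright₀ : a ⊗ₜ X * g₀ = -(a ⊗ₜ (X * K) + c • ((a * p) ⊗ₜ (X * (L + L' * S)))) := by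
    rw [hg₀, ← tmul_mul_one_tmul_add_smul, ← mul_neg, neg_add']
  have hleft₀ : g₀' * a ⊗ₜ X = -(a ⊗ₜ (K' * X) + d • ((m * a) ⊗ₜ ((L' + S' * L) * X))) := by
    rw [hg₀', ← one_tmul_add_smul_mul_tmul, ← neg_mul, neg_add']
  have hsandwich : g₁' * a ⊗ₜ X * g₁ = a ⊗ₜ (L' * X * L) + c • ((a * p) ⊗ₜ (L' * X * (S - 1)))
      + d • ((m * a) ⊗ₜ ((S' - 1) * X * L))
      + (d * c) • ((m * a * p) ⊗ₜ ((S' - 1) * X * (S - 1))) := by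
    rw [hg₁, hg₁', one_tmul_add_smul_mul_tmul, add_mul, smul_mul_assoc,
      tmul_mul_one_tmul_add_smul, tmul_mul_one_tmul_add_smul, smul_add, smul_smul, ← add_assoc]
  have hq : a ⊗ₜ X * g₁ + g₁' * a ⊗ₜ X = a ⊗ₜ (X * L + L' * X)
      + c • ((a * p) ⊗ₜ (X * (S - 1))) + d • ((m * a) ⊗ₜ ((S' - 1) * X)) := by
    rw [hg₁, hg₁', tmul_mul_one_tmul_add_smul, one_tmul_add_smul_mul_tmul, TensorProduct.tmul_add]
    abel
  -- the nilpotency of the ladder matrices kills the `c ^ 2` and `d ^ 2` terms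
  have hqp : (a ⊗ₜ X * g₁ + g₁' * a ⊗ₜ X) * (p ⊗ₜ 1) = (a * p) ⊗ₜ (X * L + L' * X)
      + d • ((m * a * p) ⊗ₜ ((S' - 1) * X)) := by
    rw [hq, add_mul, add_mul, smul_mul_assoc, smul_mul_assoc]
    simp only [Algebra.TensorProduct.tmul_mul_tmul, mul_assoc, hp, mul_zero, mul_one,
      TensorProduct.zero_tmul, smul_zero, add_zero]
  have hmq : (m ⊗ₜ 1) * (a ⊗ₜ X * g₁ + g₁' * a ⊗ₜ X) = (m * a) ⊗ₜ (X * L + L' * X)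
      + c • ((m * a * p) ⊗ₜ (X * (S - 1))) := by
    rw [hq, mul_add, mul_add, mul_smul_comm, mul_smul_comm]
    simp only [Algebra.TensorProduct.tmul_mul_tmul, ← mul_assoc, hm, zero_mul, one_mul,
      TensorProduct.zero_tmul, smul_zero, add_zero]
  rw [hsandwich, hright₀, hleft₀, hqp, hmq]
  simp only [mul_add, add_mul, mul_sub, sub_mul, mul_one, one_mul, mul_assoc,
    TensorProduct.tmul_add, TensorProduct.tmul_sub, smul_add, smul_sub, smul_smul]
  module

end LadderTensor

theorem lindblad_generator_eq {R B : Type*} [CommRing R] [Ring B] [Algebra R B]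
    {k : R} (hk : k + k = 1) (h : R) (X L L' H : B) :
    k • (L' * (X * L - L * X)) + k • ((L' * X - X * L') * L) - h • (X * H - H * X)
      = L' * X * L - X * (k • (L' * L) + h • H) - (k • (L' * L) - h • H) * X := by
  simp only [mul_sub, sub_mul, mul_add, smul_mul_assoc, mul_smul_comm, mul_assoc]
  linear_combination (norm := module) hk • (L' * (X * L))

theorem stmt17_general {E : Type*} [NormedAddCommGroup E] [InnerProductSpace ℂ E] [CompleteSpace E]
    (L S H : E →L[ℂ] E)
    (ν : ℂ) (ξ : ℝ → ℂ)
    (σp σm : Matrix (Fin 2) (Fin 2) ℂ)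
    (hp : σp = Matrix.single 1 0 1) (hm : σm = Matrix.single 0 1 1)
    (𝓛 : (E →L[ℂ] E) → (E →L[ℂ] E))
    (h𝓛 : ∀ X, 𝓛 X = (1/2 : ℂ) • (adjoint L * (X * L - L * X))
        + (1/2 : ℂ) • ((adjoint L * X - X * adjoint L) * L)
        - Complex.I • (X * H - H * X))
    (G : ℝ → Matrix (Fin 2) (Fin 2) ℂ → (E →L[ℂ] E) →
      (Matrix (Fin 2) (Fin 2) ℂ ⊗[ℂ] (E →L[ℂ] E)))
    (hG : ∀ t A X, G t A X = A ⊗ₜ[ℂ] 𝓛 X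
        + (ν * ξ t) • ((A * σp) ⊗ₜ[ℂ] ((adjoint L * X - X * adjoint L) * S))
        + conj (ν * ξ t) • ((σm * A) ⊗ₜ[ℂ] (adjoint S * (X * L - L * X)))
        + ((‖ν * ξ t‖ : ℂ) ^ 2) • ((σm * A * σp) ⊗ₜ[ℂ] (adjoint S * X * S - X)))
    (G0 G1 G0s G1s : ℝ → Matrix (Fin 2) (Fin 2) ℂ ⊗[ℂ] (E →L[ℂ] E))
    (hG0 : ∀ t, G0 t = -((1 : Matrix (Fin 2) (Fin 2) ℂ) ⊗ₜ[ℂ]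
          ((1/2 : ℂ) • (adjoint L * L) + Complex.I • H))
        - (ν * ξ t) • (σp ⊗ₜ[ℂ] (L + adjoint L * S)))
    (hG1 : ∀ t, G1 t = (1 : Matrix (Fin 2) (Fin 2) ℂ) ⊗ₜ[ℂ] L
        + (ν * ξ t) • (σp ⊗ₜ[ℂ] (S - 1)))
    (hG0s : ∀ t, G0s t = -((1 : Matrix (Fin 2) (Fin 2) ℂ) ⊗ₜ[ℂ]
          ((1/2 : ℂ) • (adjoint L * L) - Complex.I • H))
        - conj (ν * ξ t) • (σm ⊗ₜ[ℂ] (adjoint L + adjoint S * L)))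
    (hG1s : ∀ t, G1s t = (1 : Matrix (Fin 2) (Fin 2) ℂ) ⊗ₜ[ℂ] adjoint L
        + conj (ν * ξ t) • (σm ⊗ₜ[ℂ] (adjoint S - 1)))
    (T Q : ℝ → Matrix (Fin 2) (Fin 2) ℂ ⊗[ℂ] (E →L[ℂ] E) →
      Matrix (Fin 2) (Fin 2) ℂ ⊗[ℂ] (E →L[ℂ] E))
    (hT : ∀ t M, T t M = G1s t * M * G1 t + M * G0 t + G0s t * M)
    (hQ : ∀ t M, Q t M = M * G1 t + G1s t * M) :
    ∀ t (A : Matrix (Fin 2) (Fin 2) ℂ) (X : E →L[ℂ] E),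
      T t (A ⊗ₜ[ℂ] X)
        + (ν * ξ t) • (Q t (A ⊗ₜ[ℂ] X) * (σp ⊗ₜ[ℂ] 1))
        + conj (ν * ξ t) • ((σm ⊗ₜ[ℂ] 1) * Q t (A ⊗ₜ[ℂ] X))
        = G t A X := by
  intro t A X
  have hpp : σp * σp = 0 := by subst hp; simp
  have hmm : σm * σm = 0 := by subst hm; simp
  have hnorm : (‖ν * ξ t‖ : ℂ) ^ 2 = conj (ν * ξ t) * (ν * ξ t) := (Complex.conj_mul' _).symm
  rw [hT, hQ, hG, h𝓛, lindblad_generator_eq (by norm_num), hnorm]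
  exact tmul_ladder_generator_eq hpp hmm (hG1 t) (hG1s t) (hG0 t) (hG0s t)

theorem stmt17 {E : Type*} [NormedAddCommGroup E] [InnerProductSpace ℂ E] [CompleteSpace E]
    (L S H : E →L[ℂ] E)
    (hS : adjoint S * S = 1 ∧ S * adjoint S = 1) (hH : IsSelfAdjoint H)
    (ν : ℂ) (ξ : ℝ → ℂ) (hξ : Continuous ξ)
    (σp σm : Matrix (Fin 2) (Fin 2) ℂ)
    (hp : σp = Matrix.single 1 0 1) (hm : σm = Matrix.single 0 1 1)
    (𝓛 : (E →L[ℂ] E) → (E →L[ℂ] E))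
    (h𝓛 : ∀ X, 𝓛 X = (1/2 : ℂ) • (adjoint L * (X * L - L * X))
        + (1/2 : ℂ) • ((adjoint L * X - X * adjoint L) * L)
        - Complex.I • (X * H - H * X))
    (G : ℝ → Matrix (Fin 2) (Fin 2) ℂ → (E →L[ℂ] E) →
      (Matrix (Fin 2) (Fin 2) ℂ ⊗[ℂ] (E →L[ℂ] E)))
    (hG : ∀ t A X, G t A X = A ⊗ₜ[ℂ] 𝓛 X
        + (ν * ξ t) • ((A * σp) ⊗ₜ[ℂ] ((adjoint L * X - X * adjoint L) * S))
        + conj (ν * ξ t) • ((σm * A) ⊗ₜ[ℂ] (adjoint S * (X * L - L * X)))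
        + ((‖ν * ξ t‖ : ℂ) ^ 2) • ((σm * A * σp) ⊗ₜ[ℂ] (adjoint S * X * S - X)))
    (G0 G1 G0s G1s : ℝ → Matrix (Fin 2) (Fin 2) ℂ ⊗[ℂ] (E →L[ℂ] E))
    (hG0 : ∀ t, G0 t = -((1 : Matrix (Fin 2) (Fin 2) ℂ) ⊗ₜ[ℂ]
          ((1/2 : ℂ) • (adjoint L * L) + Complex.I • H))
        - (ν * ξ t) • (σp ⊗ₜ[ℂ] (L + adjoint L * S)))
    (hG1 : ∀ t, G1 t = (1 : Matrix (Fin 2) (Fin 2) ℂ) ⊗ₜ[ℂ] L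
        + (ν * ξ t) • (σp ⊗ₜ[ℂ] (S - 1)))
    (hG0s : ∀ t, G0s t = -((1 : Matrix (Fin 2) (Fin 2) ℂ) ⊗ₜ[ℂ]
          ((1/2 : ℂ) • (adjoint L * L) - Complex.I • H))
        - conj (ν * ξ t) • (σm ⊗ₜ[ℂ] (adjoint L + adjoint S * L)))
    (hG1s : ∀ t, G1s t = (1 : Matrix (Fin 2) (Fin 2) ℂ) ⊗ₜ[ℂ] adjoint L
        + conj (ν * ξ t) • (σm ⊗ₜ[ℂ] (adjoint S - 1)))
    (T Q : ℝ → Matrix (Fin 2) (Fin 2) ℂ ⊗[ℂ] (E →L[ℂ] E) →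
      Matrix (Fin 2) (Fin 2) ℂ ⊗[ℂ] (E →L[ℂ] E))
    (hT : ∀ t M, T t M = G1s t * M * G1 t + M * G0 t + G0s t * M)
    (hQ : ∀ t M, Q t M = M * G1 t + G1s t * M) :
    ∀ t (A : Matrix (Fin 2) (Fin 2) ℂ) (X : E →L[ℂ] E),
      T t (A ⊗ₜ[ℂ] X)
        + (ν * ξ t) • (Q t (A ⊗ₜ[ℂ] X) * (σp ⊗ₜ[ℂ] 1))
        + conj (ν * ξ t) • ((σm ⊗ₜ[ℂ] 1) * Q t (A ⊗ₜ[ℂ] X))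
        = G t A X :=
  stmt17_general L S H ν ξ σp σm hp hm 𝓛 h𝓛 G hG G0 G1 G0s G1s hG0 hG1 hG0s hG1s T Q hT hQ
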